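/- Let g ≥ 2 and let V = (Fin g → ZMod 2). Suppose c₁, …, c_{g−1} ∈ V all lie in the kernel of w₁ and span the kernel of w₁ as a ZMod 2-subspace. Then there exists a ℤ₄-quadratic form q on V such that q(cᵢ) = 2 for all i and q ∘ τ_{cᵢ} = q for all i = 1, …, g−1. -/

import Mathlib

/-- The mod-2 intersection form on `Fin g → ZMod 2` (dot product). -/
def B {g : ℕ} (x y : Fin g → ZMod 2) : ZMod 2 := ∑ i, x i * y i

/-- The first Stiefel–Whitney class `w₁(x) = ∑ i, x i` as a linear map. -/
def w₁ (g : ℕ) : (Fin g → ZMod 2) →ₗ[ZMod 2] ZMod 2 where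
  toFun x := ∑ i, x i
  map_add' x y := by simp [Finset.sum_add_distrib]
  map_smul' c x := by simp [Finset.mul_sum]

/-- The doubling map `ZMod 2 → ZMod 4`, sending 0 ↦ 0 and 1 ↦ 2. -/
def ι : ZMod 2 → ZMod 4 := fun a => 2 * (a.val : ZMod 4)

/-- A ℤ₄-quadratic form on `Fin g → ZMod 2`. -/
def IsZ4Quad {g : ℕ} (q : (Fin g → ZMod 2) → ZMod 4) : Prop :=
  ∀ x y, q (x + y) = q x + q y + ι (B x y)

/-- The transvection associated to `c` : `τ_c(x) = x + B(x,c) • c`. -/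
def τ {g : ℕ} (c : Fin g → ZMod 2) : (Fin g → ZMod 2) → (Fin g → ZMod 2) :=
  fun x => x + B x c • c

/-! Any ℤ₄-quadratic form satisfies `2 q(x) = ι(B(x,x)) = ι(w₁ x)`, so it takes values in
`{0, 2}` on `ker w₁`, and adding `ι ∘ ℓ` for a linear functional `ℓ` gives another one.
Spanning the `(g-1)`-dimensional space `ker w₁`, the `cᵢ` are linearly independent, so starting
from `x ↦ #{i | xᵢ = 1} mod 4` we can choose `ℓ` to turn exactly the values `q(cᵢ) = 0` into `2`.
Finally `q(c) = 2` gives `q(x + c) = q(x) + 2 + 2 = q(x)` whenever `B(x,c) = 1`. -/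

theorem LinearIndependent.exists_linearMap_apply_eq {K V κ : Type*} [Field K] [AddCommGroup V]
    [Module K V] {v : κ → V} (hv : LinearIndependent K v) (t : κ → K) :
    ∃ ℓ : V →ₗ[K] K, ∀ i, ℓ (v i) = t i := by
  obtain ⟨ℓ, hℓ⟩ := LinearMap.exists_extend ((Module.Basis.span hv).constr K t)
  refine ⟨ℓ, fun i => ?_⟩
  rw [← Module.Basis.coe_span_apply hv, ← Submodule.subtype_apply, ← LinearMap.comp_apply, hℓ,
    Module.Basis.constr_basis]

lemma ι_add (a b : ZMod 2) : ι (a + b) = ι a + ι b := by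
  revert a b; decide

lemma ι_sum {α : Type*} (s : Finset α) (f : α → ZMod 2) :
    ι (∑ i ∈ s, f i) = ∑ i ∈ s, ι (f i) :=
  map_sum (AddMonoidHom.mk' ι ι_add) f s

section

variable {g : ℕ}

lemma B_self (x : Fin g → ZMod 2) : B x x = w₁ g x := by
  refine Finset.sum_congr rfl fun i _ => ?_
  generalize x i = a
  revert a; decide

namespace IsZ4Quad

variable {q : (Fin g → ZMod 2) → ZMod 4}

lemma map_zero (hq : IsZ4Quad q) : q 0 = 0 := by
  have hι : ι 0 = 0 := by decide
  simpa [B, hι] using hq 0 0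

lemma eq_zero_or_eq_two_of_w₁_eq_zero (hq : IsZ4Quad q) {x : Fin g → ZMod 2}
    (hx : w₁ g x = 0) : q x = 0 ∨ q x = 2 := by
  have h := hq x x
  rw [B_self, hx, ZModModule.add_self, hq.map_zero] at h
  generalize q x = a at h
  revert a; decide

lemma add_ι_comp (hq : IsZ4Quad q) (ℓ : (Fin g → ZMod 2) →ₗ[ZMod 2] ZMod 2) :
    IsZ4Quad fun x => q x + ι (ℓ x) := by
  intro x y
  dsimp only
  rw [hq x y, map_add, ι_add]
  ring

lemma comp_τ (hq : IsZ4Quad q) {c : Fin g → ZMod 2} (hc : q c = 2) : q ∘ τ c = q := by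
  funext x
  obtain h | h : B x c = 0 ∨ B x c = 1 := by
    generalize B x c = a
    revert a; decide
  · simp [τ, h]
  · have h2 : 2 + ι 1 = 0 := by decide
    rw [Function.comp_apply, τ, h, one_smul, hq x c, hc, h, add_assoc, h2, add_zero]

end IsZ4Quad

def stdQuad (x : Fin g → ZMod 2) : ZMod 4 := ∑ i, ((x i).val : ZMod 4)

lemma isZ4Quad_stdQuad : IsZ4Quad (stdQuad (g := g)) := by
  intro x y
  simp only [stdQuad, B, ι_sum, ← Finset.sum_add_distrib, Pi.add_apply]
  refine Finset.sum_congr rfl fun i _ => ?_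
  generalize x i = a; generalize y i = b
  revert a b; decide

lemma exists_isZ4Quad_eq_two {q : (Fin g → ZMod 2) → ZMod 4} (hq : IsZ4Quad q) {κ : Type*}
    {c : κ → Fin g → ZMod 2} (hc : LinearIndependent (ZMod 2) c) (hker : ∀ i, w₁ g (c i) = 0) :
    ∃ q' : (Fin g → ZMod 2) → ZMod 4, IsZ4Quad q' ∧ ∀ i, q' (c i) = 2 := by
  classical
  obtain ⟨ℓ, hℓ⟩ := hc.exists_linearMap_apply_eq fun i => if q (c i) = 0 then 1 else 0
  refine ⟨_, hq.add_ι_comp ℓ, fun i => ?_⟩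
  rw [hℓ]
  rcases hq.eq_zero_or_eq_two_of_w₁_eq_zero (hker i) with h | h <;> simp [h] <;> decide

lemma finrank_ker_w₁ : Module.finrank (ZMod 2) (LinearMap.ker (w₁ g)) = g - 1 := by
  cases g with
  | zero => exact Nat.le_zero.mp ((Submodule.finrank_le _).trans_eq (by simp))
  | succ g =>
    have hsurj : Function.Surjective (w₁ (g + 1)) := fun a =>
      ⟨Pi.single 0 a, by simp [w₁]⟩
    have := LinearMap.finrank_range_add_finrank_ker (w₁ (g + 1))
    rw [LinearMap.range_eq_top.mpr hsurj, finrank_top, Module.finrank_self,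
      Module.finrank_fin_fun] at this
    omega

end

theorem stmt_8_general (g : ℕ)
    (c : Fin (g - 1) → (Fin g → ZMod 2))
    (hker : ∀ i, w₁ g (c i) = 0)
    (hspan : Submodule.span (ZMod 2) (Set.range c) = LinearMap.ker (w₁ g)) :
    ∃ q : (Fin g → ZMod 2) → ZMod 4, IsZ4Quad q ∧
      (∀ i, q (c i) = 2) ∧ (∀ i, q ∘ τ (c i) = q) := by
  have hc : LinearIndependent (ZMod 2) c := by
    rw [linearIndependent_iff_card_eq_finrank_span, Set.finrank, hspan, finrank_ker_w₁,
      Fintype.card_fin]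
  obtain ⟨q, hq, hqc⟩ := exists_isZ4Quad_eq_two isZ4Quad_stdQuad hc hker
  exact ⟨q, hq, hqc, fun i => hq.comp_τ (hqc i)⟩

theorem stmt_8 (g : ℕ) (hg : 2 ≤ g)
    (c : Fin (g - 1) → (Fin g → ZMod 2))
    (hker : ∀ i, w₁ g (c i) = 0)
    (hspan : Submodule.span (ZMod 2) (Set.range c) = LinearMap.ker (w₁ g)) :
    ∃ q : (Fin g → ZMod 2) → ZMod 4, IsZ4Quad q ∧
      (∀ i, q (c i) = 2) ∧ (∀ i, q ∘ τ (c i) = q) :=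
  stmt_8_general g c hker hspan
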